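/- (q-binomial theorem) For |q| < 1 and |z| < 1, Σ_{k≥0} (a;q)_k / (q;q)_k · z^k = (az;q)_∞ / (z;q)_∞. -/

import Mathlib

open Complex

/-- Infinite q-Pochhammer symbol `(x; q)_∞`. -/
noncomputable def qpinf (q x : ℂ) : ℂ := ∏' i : ℕ, (1 - x * q ^ i)

/-- q-shifted factorial `(x; q)_n` for an arbitrary integer `n`. -/
noncomputable def qp (q x : ℂ) (n : ℤ) : ℂ := qpinf q x / qpinf q (x * q ^ n)

/-- Finite q-Pochhammer symbol `(x; q)_k` for `k : ℕ`. -/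
noncomputable def qpn (q x : ℂ) (k : ℕ) : ℂ := ∏ i ∈ Finset.range k, (1 - x * q ^ i)

/-- Unilateral basic hypergeometric series `₂φ₁(a, b; c; q, z)`. -/
noncomputable def phi21 (q a b c z : ℂ) : ℂ :=
  ∑' k : ℕ, (qpn q a k * qpn q b k) / (qpn q q k * qpn q c k) * z ^ k

/-- Bilateral basic hypergeometric series `₂ψ₂(a, b; c, d; q, z)`. -/
noncomputable def psi22 (q a b c d z : ℂ) : ℂ :=
  ∑' k : ℤ, (qp q a k * qp q b k) / (qp q c k * qp q d k) * z ^ k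

/-!
The series `f(w) = ∑ (a;q)_k / (q;q)_k · w^k` converges for `|w| < 1` by the ratio test, and
the recurrence `(1 - q^{k+1}) c_{k+1} = (1 - a q^k) c_k` of its coefficients is equivalent to the
functional equation `(1 - w) f(w) = (1 - a w) f(q w)`. Iterating it gives
`(z;q)_n f(z) = (az;q)_n f(q^n z)`, and letting `n → ∞` (so `f(q^n z) → f(0) = 1` by dominated
convergence) yields `(z;q)_∞ f(z) = (az;q)_∞`; finally `(z;q)_∞ ≠ 0` since `|z| < 1`.
-/

open Filter Topology

section NormedRing

variable {R : Type*} [SeminormedRing R] [NormOneClass R]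

lemma one_sub_ne_zero_of_norm_lt_one {x : R} (hx : ‖x‖ < 1) : 1 - x ≠ 0 := by
  rintro h
  simp [← sub_eq_zero.mp h] at hx

lemma norm_mul_pow_lt_one {q x : R} (hq : ‖q‖ < 1) (hx : ‖x‖ < 1) (i : ℕ) : ‖x * q ^ i‖ < 1 :=
  (norm_mul_le _ _).trans_lt <| mul_lt_one_of_nonneg_of_lt_one_left (norm_nonneg x) hx
    ((norm_pow_le q i).trans (pow_le_one₀ (norm_nonneg q) hq.le))

end NormedRing

section Pochhammer

variable {q : ℂ}

lemma qpn_succ (q x : ℂ) (k : ℕ) : qpn q x (k + 1) = qpn q x k * (1 - x * q ^ k) :=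
  Finset.prod_range_succ _ _

lemma qpn_self_succ (q : ℂ) (k : ℕ) : qpn q q (k + 1) = qpn q q k * (1 - q ^ (k + 1)) := by
  rw [qpn_succ, pow_succ']

lemma qpn_self_ne_zero (hq : ‖q‖ < 1) (k : ℕ) : qpn q q k ≠ 0 :=
  Finset.prod_ne_zero_iff.mpr fun i _ ↦
    one_sub_ne_zero_of_norm_lt_one (norm_mul_pow_lt_one hq hq i)

lemma one_sub_pow_succ_ne_zero (hq : ‖q‖ < 1) (k : ℕ) : 1 - q ^ (k + 1) ≠ 0 :=
  one_sub_ne_zero_of_norm_lt_one (by simpa [pow_succ'] using norm_mul_pow_lt_one hq hq k)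

lemma summable_norm_mul_pow (x : ℂ) (hq : ‖q‖ < 1) : Summable fun i : ℕ ↦ ‖x * q ^ i‖ := by
  simpa [norm_mul, norm_pow] using (summable_geometric_of_lt_one (norm_nonneg q) hq).mul_left ‖x‖

lemma multipliable_one_sub_mul_pow (x : ℂ) (hq : ‖q‖ < 1) :
    Multipliable fun i : ℕ ↦ 1 - x * q ^ i := by
  simpa [sub_eq_add_neg] using
    multipliable_one_add_of_summable (f := fun i ↦ -(x * q ^ i))
      (by simpa using summable_norm_mul_pow x hq)

lemma tendsto_qpn_qpinf (x : ℂ) (hq : ‖q‖ < 1) :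
    Tendsto (qpn q x) atTop (𝓝 (qpinf q x)) :=
  (multipliable_one_sub_mul_pow x hq).hasProd.tendsto_prod_nat

lemma qpinf_ne_zero {x : ℂ} (hq : ‖q‖ < 1) (hx : ‖x‖ < 1) : qpinf q x ≠ 0 := by
  simpa [qpinf, sub_eq_add_neg] using tprod_one_add_ne_zero_of_summable
    (fun i ↦ by simpa [sub_eq_add_neg] using
      one_sub_ne_zero_of_norm_lt_one (norm_mul_pow_lt_one hq hx i))
    (by simpa using summable_norm_mul_pow x hq)

end Pochhammer

section Series

variable {q : ℂ} (a : ℂ)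

noncomputable def qbinomCoeff (q a : ℂ) (k : ℕ) : ℂ := qpn q a k / qpn q q k

noncomputable def qbinomSeries (q a w : ℂ) : ℂ := ∑' k : ℕ, qbinomCoeff q a k * w ^ k

lemma qbinomCoeff_zero : qbinomCoeff q a 0 = 1 := by
  simp [qbinomCoeff, qpn]

lemma qbinomCoeff_succ_mul (hq : ‖q‖ < 1) (k : ℕ) :
    qbinomCoeff q a (k + 1) * (1 - q ^ (k + 1)) = qbinomCoeff q a k * (1 - a * q ^ k) := by
  have := qpn_self_ne_zero hq k
  have := one_sub_pow_succ_ne_zero hq k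
  rw [qbinomCoeff, qbinomCoeff, qpn_succ q a, qpn_self_succ]
  field_simp

lemma qbinomCoeff_succ (hq : ‖q‖ < 1) (k : ℕ) :
    qbinomCoeff q a (k + 1) = qbinomCoeff q a k * ((1 - a * q ^ k) / (1 - q ^ (k + 1))) := by
  rw [← mul_div_assoc, eq_div_iff (one_sub_pow_succ_ne_zero hq k), qbinomCoeff_succ_mul a hq]

lemma summable_norm_qbinomCoeff_mul_pow (hq : ‖q‖ < 1) {w : ℂ} (hw : ‖w‖ < 1) :
    Summable fun k : ℕ ↦ ‖qbinomCoeff q a k * w ^ k‖ := by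
  obtain ⟨r, hwr, hr⟩ := exists_between hw
  have hq0 : Tendsto (fun k : ℕ ↦ q ^ k) atTop (𝓝 0) :=
    tendsto_pow_atTop_nhds_zero_of_norm_lt_one hq
  have hratio : Tendsto (fun k : ℕ ↦ ‖(1 - a * q ^ k) / (1 - q ^ (k + 1)) * w‖) atTop (𝓝 ‖w‖) := by
    have := (((hq0.const_mul a).const_sub 1).div
      ((hq0.comp (tendsto_add_atTop_nat 1)).const_sub 1) (by simp)).mul_const w
    simpa using this.norm
  refine summable_of_ratio_norm_eventually_le hr ?_
  filter_upwards [hratio.eventually_le_const hwr] with k hk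
  have hterm : qbinomCoeff q a (k + 1) * w ^ (k + 1)
      = (1 - a * q ^ k) / (1 - q ^ (k + 1)) * w * (qbinomCoeff q a k * w ^ k) := by
    rw [qbinomCoeff_succ a hq]
    ring
  rw [norm_norm, norm_norm, hterm, norm_mul]
  exact mul_le_mul_of_nonneg_right hk (norm_nonneg _)

lemma summable_qbinomCoeff_mul_pow (hq : ‖q‖ < 1) {w : ℂ} (hw : ‖w‖ < 1) :
    Summable fun k : ℕ ↦ qbinomCoeff q a k * w ^ k :=
  (summable_norm_qbinomCoeff_mul_pow a hq hw).of_norm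

lemma qbinomSeries_functional_eq (hq : ‖q‖ < 1) {w : ℂ} (hw : ‖w‖ < 1) :
    (1 - w) * qbinomSeries q a w = (1 - a * w) * qbinomSeries q a (q * w) := by
  have hqw : ‖q * w‖ < 1 := by simpa [mul_comm] using norm_mul_pow_lt_one hq hw 1
  have hs := summable_qbinomCoeff_mul_pow a hq hw
  have hs' := summable_qbinomCoeff_mul_pow a hq hqw
  have hdiff : qbinomSeries q a w - qbinomSeries q a (q * w)
      = ∑' k : ℕ, qbinomCoeff q a (k + 1) * (1 - q ^ (k + 1)) * w ^ (k + 1) := by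
    rw [qbinomSeries, qbinomSeries, ← hs.tsum_sub hs', (hs.sub hs').tsum_eq_zero_add]
    simp only [pow_zero, mul_one, sub_self, zero_add, mul_pow]
    exact tsum_congr fun k ↦ by ring
  have hshift : w * qbinomSeries q a w - a * w * qbinomSeries q a (q * w)
      = ∑' k : ℕ, qbinomCoeff q a k * (1 - a * q ^ k) * w ^ (k + 1) := by
    rw [qbinomSeries, qbinomSeries, ← tsum_mul_left, ← tsum_mul_left,
      ← (hs.mul_left w).tsum_sub (hs'.mul_left (a * w))]
    exact tsum_congr fun k ↦ by ring
  simp only [qbinomCoeff_succ_mul a hq, ← hshift] at hdiff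
  linear_combination hdiff

lemma qpn_mul_qbinomSeries (hq : ‖q‖ < 1) {z : ℂ} (hz : ‖z‖ < 1) (n : ℕ) :
    qpn q z n * qbinomSeries q a z = qpn q (a * z) n * qbinomSeries q a (q ^ n * z) := by
  induction n with
  | zero => simp [qpn]
  | succ n ih =>
    have hfe := qbinomSeries_functional_eq a hq (w := q ^ n * z)
      (by simpa [mul_comm] using norm_mul_pow_lt_one hq hz n)
    rw [← mul_assoc q, ← pow_succ'] at hfe
    rw [qpn_succ, qpn_succ]
    linear_combination (1 - z * q ^ n) * ih + qpn q (a * z) n * hfe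

lemma tendsto_qbinomSeries_pow_mul (hq : ‖q‖ < 1) {z : ℂ} (hz : ‖z‖ < 1) :
    Tendsto (fun n : ℕ ↦ qbinomSeries q a (q ^ n * z)) atTop (𝓝 1) := by
  have hq0 : Tendsto (fun n : ℕ ↦ q ^ n * z) atTop (𝓝 0) := by
    simpa using (tendsto_pow_atTop_nhds_zero_of_norm_lt_one hq).mul_const z
  have hlim := tendsto_tsum_of_dominated_convergence
    (f := fun n k ↦ qbinomCoeff q a k * (q ^ n * z) ^ k)
    (summable_norm_qbinomCoeff_mul_pow a hq hz)
    (fun k ↦ (hq0.pow k).const_mul _)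
    (Eventually.of_forall fun n k ↦ by
      rw [norm_mul, norm_mul, norm_pow, norm_pow, norm_mul, norm_pow]
      gcongr
      exact mul_le_of_le_one_left (norm_nonneg z) (pow_le_one₀ (norm_nonneg q) hq.le))
  rwa [tsum_eq_single 0 (fun k hk ↦ by simp [hk]), pow_zero, mul_one, qbinomCoeff_zero] at hlim

end Series

/-- The q-binomial theorem. -/
theorem q_binomial (q a z : ℂ) (hq : ‖q‖ < 1) (hz : ‖z‖ < 1) :
    ∑' k : ℕ, qpn q a k / qpn q q k * z ^ k = qpinf q (a * z) / qpinf q z := by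
  change qbinomSeries q a z = _
  have hleft : Tendsto (fun n ↦ qpn q z n * qbinomSeries q a z) atTop
      (𝓝 (qpinf q z * qbinomSeries q a z)) :=
    (tendsto_qpn_qpinf z hq).mul_const _
  have hright : Tendsto (fun n ↦ qpn q z n * qbinomSeries q a z) atTop
      (𝓝 (qpinf q (a * z) * 1)) := by
    simpa only [qpn_mul_qbinomSeries a hq hz] using
      (tendsto_qpn_qpinf (a * z) hq).mul (tendsto_qbinomSeries_pow_mul a hq hz)
  rw [eq_div_iff (qpinf_ne_zero hq hz), mul_comm]
  simpa using tendsto_nhds_unique hleft hright
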